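/- Let A be an n×n matrix over an algebraically closed field K of characteristic 0, such that for every 1 ≤ k ≤ n all k×k principal minors of A are equal. Then the ideal of spectral invariants (S_1,…,S_n) ⊆ K[v_1,…,v_n] equals the ideal (e_1,…,e_n) generated by the elementary symmetric polynomials. In particular, the only diagonal matrix D with A and A+D having the same characteristic polynomial is D = 0. -/

import Mathlib

open MvPolynomial Finset Matrix

/-- The principal minor of `A` on the rows and columns indexed by `N`. -/
noncomputable def principalMinor {K : Type*} [CommRing K] {n : ℕ}
    (A : Matrix (Fin n) (Fin n) K) (N : Finset (Fin n)) : K :=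
  Matrix.det (A.submatrix (fun x : {x // x ∈ N} => (x : Fin n)) fun x : {x // x ∈ N} => (x : Fin n))

/-- The `i`-th spectral invariant `S_i = C_i(v) - C_i(0)` of `A`, where
`det(A + D - λI) = ∑_{i=0}^n C_i(v) (-λ)^{n-i}` and `D = diag(v_1,…,v_n)`. -/
noncomputable def spectralInvariant {K : Type*} [CommRing K] {n : ℕ}
    (A : Matrix (Fin n) (Fin n) K) (i : ℕ) : MvPolynomial (Fin n) K :=
  (-1 : MvPolynomial (Fin n) K) ^ i *
    (((A.map MvPolynomial.C + Matrix.diagonal fun j => MvPolynomial.X j).charpoly).coeff (n - i)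
      - MvPolynomial.C (A.charpoly.coeff (n - i)))

section Auxiliary

open Polynomial

variable {R S : Type*} [CommRing R] [CommRing S] {n : ℕ}

lemma det_piecewise_one (M : Matrix (Fin n) (Fin n) R) (T : Finset (Fin n)) :
    Matrix.det (Matrix.of (T.piecewise (1 : Matrix (Fin n) (Fin n) R) M)) = principalMinor M Tᶜ := by
  classical
  let e : {x // x ∈ T} ⊕ {x // x ∈ Tᶜ} ≃ Fin n :=
    (Equiv.sumCongr (Equiv.refl _) (Equiv.subtypeEquivRight (fun x => by simp))).trans
      (Equiv.Set.sumCompl (T : Set (Fin n)))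
  have he1 : ∀ i : {x // x ∈ T}, e (Sum.inl i) = (i : Fin n) := fun i => rfl
  have he2 : ∀ i : {x // x ∈ Tᶜ}, e (Sum.inr i) = (i : Fin n) := fun i => rfl
  rw [← Matrix.det_submatrix_equiv_self e]
  have hsub : (Matrix.of (T.piecewise (1 : Matrix (Fin n) (Fin n) R) M)).submatrix e e =
      Matrix.fromBlocks 1 0
        (M.submatrix (fun x : {x // x ∈ Tᶜ} => (x : Fin n)) (fun x : {x // x ∈ T} => (x : Fin n)))
        (M.submatrix (fun x : {x // x ∈ Tᶜ} => (x : Fin n)) (fun x : {x // x ∈ Tᶜ} => (x : Fin n))) := by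
    ext i j
    cases i with
    | inl i =>
      cases j with
      | inl j =>
        simp only [Matrix.submatrix_apply, he1, Matrix.of_apply, Finset.piecewise, i.2,
          if_pos, Matrix.fromBlocks_apply₁₁, Matrix.one_apply, Subtype.ext_iff]
      | inr j =>
        have hj : (j : Fin n) ∉ T := Finset.mem_compl.mp j.2
        have hij : (i : Fin n) ≠ (j : Fin n) := fun h => hj (h ▸ i.2)
        simp only [Matrix.submatrix_apply, he1, he2, Matrix.of_apply, Finset.piecewise, i.2,
          if_pos, Matrix.fromBlocks_apply₁₂, Matrix.one_apply, hij, if_neg, Matrix.zero_apply]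
        simp [hij]
    | inr i =>
      have hi : (i : Fin n) ∉ T := Finset.mem_compl.mp i.2
      cases j with
      | inl j =>
        simp only [Matrix.submatrix_apply, he1, he2, Matrix.of_apply, Finset.piecewise, hi,
          if_neg, Matrix.fromBlocks_apply₂₁, not_false_iff]
      | inr j =>
        simp only [Matrix.submatrix_apply, he2, Matrix.of_apply, Finset.piecewise, hi,
          if_neg, Matrix.fromBlocks_apply₂₂, not_false_iff]
  rw [hsub, Matrix.det_fromBlocks_zero₁₂]
  simp [principalMinor]

lemma det_add_diagonal (M : Matrix (Fin n) (Fin n) R) (v : Fin n → R) :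
    (M + Matrix.diagonal v).det
      = ∑ T : Finset (Fin n), (∏ j ∈ T, v j) * principalMinor M Tᶜ := by
  classical
  have h1 : (M + Matrix.diagonal v).det
      = Matrix.detRowAlternating (Matrix.diagonal v + M : Matrix (Fin n) (Fin n) R) := by
    rw [add_comm]
    rfl
  rw [h1]
  have h2 := (Matrix.detRowAlternating (R := R) (n := Fin n)).toMultilinearMap.map_add_univ
      (Matrix.diagonal v) M
  simp only [AlternatingMap.coe_multilinearMap] at h2
  refine Eq.trans h2 ?_
  refine Finset.sum_congr rfl fun T _ => ?_
  have h3 : T.piecewise (Matrix.diagonal v) (M : Matrix (Fin n) (Fin n) R)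
      = T.piecewise (fun i => v i • (T.piecewise (1 : Matrix (Fin n) (Fin n) R) M) i)
          (T.piecewise (1 : Matrix (Fin n) (Fin n) R) M) := by
    funext i
    by_cases hi : i ∈ T
    · simp only [Finset.piecewise_eq_of_mem _ _ _ hi]
      funext j
      simp [Matrix.diagonal, Matrix.one_apply, Pi.smul_apply, mul_ite, Finset.piecewise, hi]
    · simp [Finset.piecewise, hi]
  have h4 := (Matrix.detRowAlternating (R := R) (n := Fin n)).toMultilinearMap.map_piecewise_smul
      v (T.piecewise (1 : Matrix (Fin n) (Fin n) R) M) T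
  simp only [AlternatingMap.coe_multilinearMap] at h4
  rw [h3, h4]
  have h5 := det_piecewise_one M T
  rw [Matrix.det] at h5
  rw [show Matrix.detRowAlternating (T.piecewise (1 : Matrix (Fin n) (Fin n) R) M)
      = principalMinor M Tᶜ from h5]
  simp [smul_eq_mul]

lemma principalMinor_map (f : R →+* S) (M : Matrix (Fin n) (Fin n) R) (N : Finset (Fin n)) :
    principalMinor (M.map f) N = f (principalMinor M N) := by
  rw [principalMinor, principalMinor, Matrix.submatrix_map]
  exact (RingHom.map_det f _).symm

lemma principalMinor_neg (M : Matrix (Fin n) (Fin n) R) (N : Finset (Fin n)) :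
    principalMinor (-M) N = (-1) ^ N.card * principalMinor M N := by
  rw [principalMinor, principalMinor]
  have : (-M).submatrix (fun x : {x // x ∈ N} => (x : Fin n)) (fun x : {x // x ∈ N} => (x : Fin n))
      = -(M.submatrix _ _) := rfl
  rw [this, Matrix.det_neg, Fintype.card_coe]

lemma principalMinor_empty (M : Matrix (Fin n) (Fin n) R) : principalMinor M ∅ = 1 := by
  haveI : IsEmpty {x // x ∈ (∅ : Finset (Fin n))} := ⟨fun x => (Finset.notMem_empty _ x.2)⟩
  rw [principalMinor, Matrix.det_isEmpty]

lemma charpoly_add_diagonal (M : Matrix (Fin n) (Fin n) R) (v : Fin n → R) :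
    (M + Matrix.diagonal v).charpoly
      = ∑ T : Finset (Fin n), (∏ j ∈ T, (Polynomial.X - Polynomial.C (v j))) *
          Polynomial.C ((-1 : R) ^ (Tᶜ.card) * principalMinor M Tᶜ) := by
  classical
  have hcm : Matrix.charmatrix (M + Matrix.diagonal v)
      = (-(M.map Polynomial.C)) + Matrix.diagonal (fun j => Polynomial.X - Polynomial.C (v j)) := by
    ext i j
    by_cases hij : i = j
    · subst hij
      simp [Matrix.charmatrix_apply, Matrix.diagonal_apply_eq]
      ring
    · simp [Matrix.charmatrix_apply, Matrix.diagonal_apply_ne _ hij, hij]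
  rw [Matrix.charpoly, hcm, det_add_diagonal]
  refine Finset.sum_congr rfl fun T _ => ?_
  rw [show -(M.map Polynomial.C) = (-M).map Polynomial.C by ext i j; simp]
  rw [principalMinor_map, principalMinor_neg]

lemma prod_X_sub_C_coeff' (s : Finset (Fin n)) (v : Fin n → R) {k : ℕ} (h : k ≤ s.card) :
    (∏ j ∈ s, (Polynomial.X - Polynomial.C (v j))).coeff k
      = (-1) ^ (s.card - k) * ∑ t ∈ s.powersetCard (s.card - k), ∏ j ∈ t, v j := by
  have h1 : ∀ j ∈ s, Polynomial.X - Polynomial.C (v j)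
      = Polynomial.X + Polynomial.C (-v j) := by intro j _; simp [sub_eq_add_neg]
  rw [Finset.prod_congr rfl h1, Finset.prod_X_add_C_coeff s (fun j => -v j) h]
  rw [Finset.mul_sum]
  refine Finset.sum_congr rfl fun t ht => ?_
  rw [Finset.mem_powersetCard] at ht
  rw [← ht.2]
  rw [show ∏ j ∈ t, -v j = ∏ j ∈ t, (-1) * v j by simp]
  rw [Finset.prod_mul_distrib, Finset.prod_const]

lemma coeff_prod_X_sub_C_of_lt (s : Finset (Fin n)) (v : Fin n → R) {k : ℕ} (h : s.card < k) :
    (∏ j ∈ s, (Polynomial.X - Polynomial.C (v j))).coeff k = 0 := by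
  apply Polynomial.coeff_eq_zero_of_natDegree_lt
  calc (∏ j ∈ s, (Polynomial.X - Polynomial.C (v j))).natDegree
      ≤ ∑ j ∈ s, (Polynomial.X - Polynomial.C (v j)).natDegree := Polynomial.natDegree_prod_le _ _
    _ ≤ s.card := by
        rw [show s.card = ∑ j ∈ s, 1 from by simp]
        exact Finset.sum_le_sum fun j _ => (Polynomial.natDegree_X_sub_C_le _)
    _ < k := h

lemma card_supersets (s : Finset (Fin n)) {m : ℕ} (hm : s.card ≤ m) :
    (Finset.univ.filter (fun T : Finset (Fin n) => s ⊆ T ∧ T.card = m)).card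
      = (n - s.card).choose (m - s.card) := by
  classical
  have := Finset.card_bij' (fun (T : Finset (Fin n)) (_ : T ∈ Finset.univ.filter
        (fun T : Finset (Fin n) => s ⊆ T ∧ T.card = m)) => T \ s)
    (fun (u : Finset (Fin n)) (_ : u ∈ sᶜ.powersetCard (m - s.card)) => s ∪ u)
    ?_ ?_ ?_ ?_
  · rw [this, Finset.card_powersetCard, Finset.card_compl, Fintype.card_fin]
  · intro T hT
    rw [Finset.mem_filter] at hT
    rw [Finset.mem_powersetCard]
    constructor
    · intro x hx
      rw [Finset.mem_sdiff] at hx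
      exact Finset.mem_compl.mpr hx.2
    · rw [Finset.card_sdiff_of_subset hT.2.1, hT.2.2]
  · intro u hu
    rw [Finset.mem_powersetCard] at hu
    rw [Finset.mem_filter]
    have hdisj : Disjoint s u := by
      rw [Finset.disjoint_left]
      intro x hxs hxu
      exact (Finset.mem_compl.mp (hu.1 hxu)) hxs
    refine ⟨Finset.mem_univ _, Finset.subset_union_left, ?_⟩
    rw [Finset.card_union_of_disjoint hdisj, hu.2]
    omega
  · intro T hT
    rw [Finset.mem_filter] at hT
    exact Finset.union_sdiff_of_subset hT.2.1
  · intro u hu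
    rw [Finset.mem_powersetCard] at hu
    apply Finset.union_sdiff_cancel_left
    rw [Finset.disjoint_left]
    intro x hxs hxu
    exact (Finset.mem_compl.mp (hu.1 hxu)) hxs

lemma coeff_charpoly_add_diagonal (M : Matrix (Fin n) (Fin n) R) (v : Fin n → R)
    (a : ℕ → R) (ha : ∀ N : Finset (Fin n), principalMinor M N = a N.card)
    {i : ℕ} (hn : i ≤ n) :
    (M + Matrix.diagonal v).charpoly.coeff (n - i)
      = (-1 : R) ^ i * ∑ t ∈ Finset.range (i + 1),
          (((n - t).choose (n - i) : R) * a (i - t)) *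
            ∑ s ∈ Finset.powersetCard t Finset.univ, ∏ j ∈ s, v j := by
  classical
  rw [charpoly_add_diagonal, Polynomial.finset_sum_coeff]
  have hTn : ∀ T : Finset (Fin n), T.card ≤ n := fun T => by
    simpa using Finset.card_le_univ T
  have step1 : ∀ T : Finset (Fin n),
      ((∏ j ∈ T, (Polynomial.X - Polynomial.C (v j))) *
          Polynomial.C ((-1 : R) ^ (Tᶜ.card) * principalMinor M Tᶜ)).coeff (n - i)
      = (-1 : R) ^ i * (if n - i ≤ T.card
          then a (n - T.card) * ∑ s ∈ T.powersetCard (T.card - (n - i)), ∏ j ∈ s, v j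
          else 0) := by
    intro T
    rw [Polynomial.coeff_mul_C, ha, Finset.card_compl, Fintype.card_fin]
    by_cases h : n - i ≤ T.card
    · rw [if_pos h, prod_X_sub_C_coeff' T v h]
      have hexp : (T.card - (n - i)) + (n - T.card) = i := by
        have := hTn T; omega
      have hsgn : (-1 : R) ^ (T.card - (n - i)) * (-1 : R) ^ (n - T.card) = (-1 : R) ^ i := by
        rw [← pow_add, hexp]
      ring_nf
      rw [← hsgn]
      ring
    · rw [if_neg h, coeff_prod_X_sub_C_of_lt T v (by omega), zero_mul, mul_zero]
  rw [Finset.sum_congr rfl fun T _ => step1 T, ← Finset.mul_sum]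
  congr 1
  have step2 : ∀ T : Finset (Fin n),
      (if n - i ≤ T.card
          then a (n - T.card) * ∑ s ∈ T.powersetCard (T.card - (n - i)), ∏ j ∈ s, v j
          else 0)
      = ∑ s : Finset (Fin n), (if s ⊆ T ∧ T.card = n - i + s.card
          then a (i - s.card) * ∏ j ∈ s, v j else 0) := by
    intro T
    by_cases h : n - i ≤ T.card
    · rw [if_pos h, Finset.mul_sum, ← Finset.sum_filter]
      have hset : (Finset.univ.filter fun s : Finset (Fin n) =>
          s ⊆ T ∧ T.card = n - i + s.card) = T.powersetCard (T.card - (n - i)) := by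
        ext s
        simp only [Finset.mem_filter, Finset.mem_univ, true_and, Finset.mem_powersetCard]
        constructor
        · rintro ⟨h1, h2⟩; exact ⟨h1, by omega⟩
        · rintro ⟨h1, h2⟩; exact ⟨h1, by omega⟩
      rw [hset]
      refine Finset.sum_congr rfl fun s hs => ?_
      rw [Finset.mem_powersetCard] at hs
      have : i - s.card = n - T.card := by have := hTn T; omega
      rw [this]
    · rw [if_neg h]
      symm
      apply Finset.sum_eq_zero
      intro s _
      rw [if_neg]
      rintro ⟨-, h2⟩
      omega
  rw [Finset.sum_congr rfl fun T (_ : T ∈ Finset.univ) => step2 T, Finset.sum_comm]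
  have step3 : ∀ s : Finset (Fin n),
      (∑ T : Finset (Fin n), if s ⊆ T ∧ T.card = n - i + s.card
          then a (i - s.card) * ∏ j ∈ s, v j else 0)
      = ((n - s.card).choose (n - i) : R) * (a (i - s.card) * ∏ j ∈ s, v j) := by
    intro s
    rw [← Finset.sum_filter, Finset.sum_const, card_supersets s (by omega)]
    rw [show n - i + s.card - s.card = n - i from by omega, nsmul_eq_mul]
  rw [Finset.sum_congr rfl fun s (_ : s ∈ Finset.univ) => step3 s]
  -- now regroup by cardinality
  have hfib := Finset.sum_fiberwise_of_maps_to (g := fun s : Finset (Fin n) => s.card)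
    (t := Finset.range (n + 1))
    (fun s (_ : s ∈ (Finset.univ : Finset (Finset (Fin n)))) =>
      Finset.mem_range.mpr (Nat.lt_succ_of_le (hTn s)))
    (fun s => ((n - s.card).choose (n - i) : R) * (a (i - s.card) * ∏ j ∈ s, v j))
  rw [← hfib]
  have hcard : ∀ t : ℕ, (Finset.univ.filter fun s : Finset (Fin n) => s.card = t)
      = Finset.powersetCard t Finset.univ := by
    intro t; ext s
    simp [Finset.mem_powersetCard]
  have step4 : ∀ t ∈ Finset.range (n + 1),
      (∑ s ∈ Finset.univ.filter (fun s : Finset (Fin n) => s.card = t),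
        ((n - s.card).choose (n - i) : R) * (a (i - s.card) * ∏ j ∈ s, v j))
      = (((n - t).choose (n - i) : R) * a (i - t)) *
          ∑ s ∈ Finset.powersetCard t Finset.univ, ∏ j ∈ s, v j := by
    intro t _
    rw [hcard t, Finset.mul_sum]
    refine Finset.sum_congr rfl fun s hs => ?_
    rw [Finset.mem_powersetCard] at hs
    rw [← hs.2]
    ring
  rw [Finset.sum_congr rfl step4]
  symm
  apply Finset.sum_subset
  · intro t ht; rw [Finset.mem_range] at *; omega
  · intro t ht hti
    rw [Finset.mem_range] at ht hti
    have : (n - t).choose (n - i) = 0 := Nat.choose_eq_zero_of_lt (by omega)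
    rw [this]
    simp

lemma esum_zero (v : Fin n → R) :
    ∑ s ∈ Finset.powersetCard 0 (Finset.univ : Finset (Fin n)), ∏ j ∈ s, v j = 1 := by
  rw [Finset.powersetCard_zero, Finset.sum_singleton, Finset.prod_empty]

lemma esum_of_zero {t : ℕ} (ht : 1 ≤ t) :
    ∑ s ∈ Finset.powersetCard t (Finset.univ : Finset (Fin n)), ∏ j ∈ s, (0 : R) = 0 := by
  apply Finset.sum_eq_zero
  intro s hs
  rw [Finset.mem_powersetCard] at hs
  obtain ⟨x, hx⟩ := Finset.card_pos.mp (by omega : 0 < s.card)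
  exact Finset.prod_eq_zero hx rfl

lemma coeff_sub_formula (M : Matrix (Fin n) (Fin n) R) (v : Fin n → R)
    (a : ℕ → R) (ha : ∀ N : Finset (Fin n), principalMinor M N = a N.card)
    {i : ℕ} (hn : i ≤ n) :
    (M + Matrix.diagonal v).charpoly.coeff (n - i) - M.charpoly.coeff (n - i)
      = (-1 : R) ^ i * ∑ t ∈ Finset.Icc 1 i,
          (((n - t).choose (n - i) : R) * a (i - t)) *
            ∑ s ∈ Finset.powersetCard t Finset.univ, ∏ j ∈ s, v j := by
  have h0 := coeff_charpoly_add_diagonal M (fun _ => (0 : R)) a ha hn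
  rw [Matrix.diagonal_zero, add_zero] at h0
  rw [coeff_charpoly_add_diagonal M v a ha hn, h0, ← mul_sub, ← Finset.sum_sub_distrib]
  congr 1
  rw [← Finset.sum_subset (s₁ := Finset.Icc 1 i) (s₂ := Finset.range (i + 1))
      (fun t ht => by rw [Finset.mem_Icc] at ht; rw [Finset.mem_range]; omega) ?_]
  · refine Finset.sum_congr rfl fun t ht => ?_
    rw [Finset.mem_Icc] at ht
    rw [esum_of_zero ht.1, mul_zero, sub_zero]
  · intro t ht hti
    rw [Finset.mem_range] at ht
    rw [Finset.mem_Icc] at hti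
    have ht0 : t = 0 := by omega
    subst ht0
    rw [esum_zero v, esum_zero fun _ => (0 : R), sub_self]

end Auxiliary

/-- If for every `1 ≤ k ≤ n` all `k × k` principal minors of `A` are equal, then
the ideal of spectral invariants `(S_1,…,S_n)` equals `(e_1,…,e_n)`; in particular
the only diagonal matrix `D` such that `A` and `A + D` have the same characteristic
polynomial is `D = 0`. -/
theorem idealSpectralInvariants_eq_of_symmetrized_minors
    {K : Type*} [Field K] [IsAlgClosed K] [CharZero K] {n : ℕ}
    (A : Matrix (Fin n) (Fin n) K)
    (h : ∀ k, 1 ≤ k → k ≤ n → ∀ N M : Finset (Fin n), N.card = k → M.card = k →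
      principalMinor A N = principalMinor A M) :
    Ideal.span (Set.range fun i : Fin n => spectralInvariant A ((i : ℕ) + 1)) =
        Ideal.span (Set.range fun i : Fin n => MvPolynomial.esymm (Fin n) K ((i : ℕ) + 1)) ∧
      ∀ d : Fin n → K, (A + Matrix.diagonal d).charpoly = A.charpoly → d = 0 := by
  classical
  -- the common value of the principal minors
  have hex : ∀ k, k ≤ n → ∃ b : K, ∀ N : Finset (Fin n), N.card = k → principalMinor A N = b := by
    intro k hk
    obtain ⟨N₀, -, hN₀⟩ := Finset.exists_subset_card_eq
      (show k ≤ (Finset.univ : Finset (Fin n)).card by simpa using hk)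
    refine ⟨principalMinor A N₀, fun N hN => ?_⟩
    rcases Nat.eq_zero_or_pos k with rfl | hk1
    · rw [Finset.card_eq_zero] at hN hN₀
      rw [hN, hN₀]
    · exact h k hk1 hk N N₀ hN hN₀
  set a : ℕ → K := fun k => if hk : k ≤ n then (hex k hk).choose else 0 with ha_def
  have haN : ∀ N : Finset (Fin n), principalMinor A N = a N.card := by
    intro N
    have hcard : N.card ≤ n := by simpa using Finset.card_le_univ N
    rw [ha_def]
    simp only [hcard, dif_pos]
    exact (hex N.card hcard).choose_spec N rfl
  have ha0 : a 0 = 1 := by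
    have h0 := haN ∅
    rw [principalMinor_empty, Finset.card_empty] at h0
    exact h0.symm
  -- the polynomial version of the hypothesis
  have haN' : ∀ N : Finset (Fin n),
      principalMinor (A.map (MvPolynomial.C : K →+* MvPolynomial (Fin n) K)) N
        = MvPolynomial.C (a N.card) := by
    intro N
    rw [principalMinor_map (MvPolynomial.C : K →+* MvPolynomial (Fin n) K), haN]
  have hesymm : ∀ t : ℕ, MvPolynomial.esymm (Fin n) K t
      = ∑ s ∈ Finset.powersetCard t Finset.univ, ∏ j ∈ s, MvPolynomial.X j := fun t => rfl
  -- the S formula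
  have SFormula : ∀ m, 1 ≤ m → m ≤ n → spectralInvariant A m
      = ∑ t ∈ Finset.Icc 1 m,
          MvPolynomial.C (((n - t).choose (n - m) : K) * a (m - t)) *
            MvPolynomial.esymm (Fin n) K t := by
    intro m h1 hm
    have key := coeff_sub_formula (R := MvPolynomial (Fin n) K) (A.map MvPolynomial.C)
      (fun j => MvPolynomial.X j) (fun k => MvPolynomial.C (a k)) haN' hm
    rw [spectralInvariant]
    have hmapc : (MvPolynomial.C (A.charpoly.coeff (n - m)) : MvPolynomial (Fin n) K)
        = ((A.map (MvPolynomial.C : K →+* MvPolynomial (Fin n) K)).charpoly).coeff (n - m) := by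
      rw [Matrix.charpoly_map, Polynomial.coeff_map]
    rw [hmapc, key, ← mul_assoc, ← pow_add, Even.neg_one_pow ⟨m, by ring⟩, one_mul]
    refine Finset.sum_congr rfl fun t ht => ?_
    rw [hesymm]
    simp only [RingHom.map_mul, MvPolynomial.C_eq_coe_nat]
  -- n must be positive whenever we have generators
  constructor
  · -- ideal equality
    apply le_antisymm
    · rw [Ideal.span_le]
      rintro x ⟨i, rfl⟩
      have h1 : 1 ≤ (i : ℕ) + 1 := le_add_self
      have h2 : (i : ℕ) + 1 ≤ n := i.isLt
      show spectralInvariant A ((i : ℕ) + 1) ∈ _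
      rw [SFormula _ h1 h2]
      apply Ideal.sum_mem
      intro t ht
      rw [Finset.mem_Icc] at ht
      apply Ideal.mul_mem_left
      apply Ideal.subset_span
      refine ⟨⟨t - 1, by omega⟩, ?_⟩
      simp only
      congr 1
      omega
    · rw [Ideal.span_le]
      rintro x ⟨i, rfl⟩
      simp only [SetLike.mem_coe]
      have h2 : (i : ℕ) + 1 ≤ n := i.isLt
      -- prove by strong induction that esymm m ∈ span S for 1 ≤ m ≤ n
      suffices hind : ∀ m, 1 ≤ m → m ≤ n → MvPolynomial.esymm (Fin n) K m ∈
          Ideal.span (Set.range fun i : Fin n => spectralInvariant A ((i : ℕ) + 1)) by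
        exact hind _ le_add_self h2
      intro m
      induction m using Nat.strong_induction_on with
      | _ m ih =>
        intro h1 hm
        have hS : spectralInvariant A m ∈
            Ideal.span (Set.range fun i : Fin n => spectralInvariant A ((i : ℕ) + 1)) := by
          apply Ideal.subset_span
          refine ⟨⟨m - 1, by omega⟩, ?_⟩
          simp only
          congr 1
          omega
        obtain ⟨m', rfl⟩ : ∃ m', m = m' + 1 := ⟨m - 1, by omega⟩
        have hsplit := SFormula (m' + 1) h1 hm
        rw [Finset.sum_Icc_succ_top (by omega : 1 ≤ m' + 1)] at hsplit
        have htop : (MvPolynomial.C (((n - (m' + 1)).choose (n - (m' + 1)) : K)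
            * a (m' + 1 - (m' + 1))) : MvPolynomial (Fin n) K) = 1 := by
          rw [Nat.choose_self, Nat.sub_self, ha0]
          simp
        rw [htop, one_mul] at hsplit
        have : MvPolynomial.esymm (Fin n) K (m' + 1) = spectralInvariant A (m' + 1)
            - ∑ t ∈ Finset.Icc 1 m',
              MvPolynomial.C (((n - t).choose (n - (m' + 1)) : K) * a (m' + 1 - t)) *
                MvPolynomial.esymm (Fin n) K t := by
          rw [hsplit]; ring
        rw [this]
        apply Ideal.sub_mem _ hS
        apply Ideal.sum_mem
        intro t ht
        rw [Finset.mem_Icc] at ht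
        exact Ideal.mul_mem_left _ _ (ih t (by omega) ht.1 (by omega))
  · -- part 2
    intro d heq
    rcases Nat.eq_zero_or_pos n with hn0 | hn0
    · funext j
      subst hn0
      exact j.elim0
    -- all elementary symmetric values of d vanish
    have hvanish : ∀ m, 1 ≤ m → m ≤ n →
        ∑ s ∈ Finset.powersetCard m (Finset.univ : Finset (Fin n)), ∏ j ∈ s, d j = 0 := by
      intro m
      induction m using Nat.strong_induction_on with
      | _ m ih =>
        intro h1 hm
        have key := coeff_sub_formula A d a haN hm
        rw [heq, sub_self] at key
        have hsum : ∑ t ∈ Finset.Icc 1 m,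
            (((n - t).choose (n - m) : K) * a (m - t)) *
              ∑ s ∈ Finset.powersetCard t Finset.univ, ∏ j ∈ s, d j = 0 := by
          have hne : ((-1 : K) ^ m) ≠ 0 := by
            apply pow_ne_zero; norm_num
          exact (mul_eq_zero.mp key.symm).resolve_left hne
        obtain ⟨m', rfl⟩ : ∃ m', m = m' + 1 := ⟨m - 1, by omega⟩
        rw [Finset.sum_Icc_succ_top (by omega : 1 ≤ m' + 1)] at hsum
        have hzero : ∑ t ∈ Finset.Icc 1 m',
            (((n - t).choose (n - (m' + 1)) : K) * a (m' + 1 - t)) *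
              ∑ s ∈ Finset.powersetCard t Finset.univ, ∏ j ∈ s, d j = 0 := by
          apply Finset.sum_eq_zero
          intro t ht
          rw [Finset.mem_Icc] at ht
          rw [ih t (by omega) ht.1 (by omega), mul_zero]
        rw [hzero, zero_add, Nat.choose_self, Nat.sub_self, ha0] at hsum
        simpa using hsum
    -- hence ∏ (X - C (d j)) = X ^ n
    have hP : (∏ j : Fin n, (Polynomial.X - Polynomial.C (d j))) = Polynomial.X ^ n := by
      ext kk
      rcases lt_trichotomy kk n with hk | hk | hk
      · rw [prod_X_sub_C_coeff' Finset.univ d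
          (by simpa using hk.le : kk ≤ (Finset.univ : Finset (Fin n)).card)]
        rw [Polynomial.coeff_X_pow, if_neg hk.ne]
        have hcard : (Finset.univ : Finset (Fin n)).card = n := by simp
        rw [hcard, hvanish (n - kk) (by omega) (by omega), mul_zero]
      · rw [prod_X_sub_C_coeff' Finset.univ d (by simpa using hk.le)]
        have hcard : (Finset.univ : Finset (Fin n)).card = n := by simp
        rw [hcard, hk, Nat.sub_self, esum_zero, Polynomial.coeff_X_pow, if_pos rfl]
        simp
      · rw [coeff_prod_X_sub_C_of_lt Finset.univ d (by simpa using hk),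
          Polynomial.coeff_X_pow, if_neg hk.ne']
    funext j
    have hev := congrArg (Polynomial.eval (d j)) hP
    rw [Polynomial.eval_prod, Polynomial.eval_pow, Polynomial.eval_X] at hev
    have : ∏ l : Fin n, (Polynomial.X - Polynomial.C (d l)).eval (d j) = 0 := by
      apply Finset.prod_eq_zero (Finset.mem_univ j)
      simp
    rw [this] at hev
    have := pow_eq_zero_iff (by omega : n ≠ 0) |>.mp hev.symm
    simpa using this
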